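/- arXiv:0708.2572 — 2 statements merged into one kernel-verified Lean document; each statement's English description precedes it below -/
import Mathlib

section
/- For even m ≥ 6, the coefficient of q^3 in d_m(q) equals m(m-3)/2. -/
open Polynomial

/-- The q-derangement polynomial, defined by the recursion
`d_n(q) = (1+q+⋯+q^{n-1}) d_{n-1}(q) + (-1)^n q^{C(n,2)}` for `n ≥ 2`, with `d_1(q) = 0`. -/
noncomputable def dq : ℕ → Polynomial ℤ
  | 0 => 0
  | 1 => 0
  | (n + 2) =>
      (∑ i ∈ Finset.range (n + 2), X ^ i) * dq (n + 1)
        + (-1) ^ (n + 2) * X ^ ((n + 2).choose 2)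

/-- `A n k` is the coefficient of `q^k` in `d_n(q)`. -/
noncomputable def A (n k : ℕ) : ℤ := (dq n).coeff k

open Finset

/-!
Multiplying by `1 + q + ⋯ + q^n` turns the coefficient sequence into its sequence of partial
sums in degrees `≤ n`, and the sign term `± q^{C(n+1,2)}` lies above degree `n` once `n ≥ 2`.
So, starting from `d_2 = q` and `d_3 = q + q^2`, the coefficients of `q^0, q^1, q^2, q^3` in
`d_n` are obtained by iterated partial sums: `0`, `1`, `n - 2` and `n(n-3)/2`.
-/

theorem Polynomial.coeff_geom_sum_mul {R : Type*} [Semiring R] (p : R[X]) {n k : ℕ}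
    (hk : k < n) :
    ((∑ i ∈ range n, X ^ i) * p).coeff k = ∑ i ∈ range (k + 1), p.coeff i := by
  have hfilter : (range n).filter (· ≤ k) = range (k + 1) := by
    ext i
    simp only [mem_filter, mem_range]
    omega
  rw [sum_mul, finsetSum_coeff]
  simp only [coeff_X_pow_mul']
  rw [sum_ite, sum_const_zero, add_zero, hfilter,
    ← sum_range_reflect (fun i => p.coeff i) (k + 1), Nat.add_sub_cancel]

lemma lt_choose_two_succ {n : ℕ} (hn : 2 ≤ n) : n < (n + 1).choose 2 := by
  have : 0 < n.choose 2 := Nat.choose_pos hn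
  rw [Nat.choose_succ_succ' n 1, Nat.choose_one_right]
  change n < n + n.choose 2
  omega

lemma A_succ {n k : ℕ} (hn : 2 ≤ n) (hk : k ≤ n) :
    A (n + 1) k = ∑ i ∈ range (k + 1), A n i := by
  obtain ⟨n, rfl⟩ : ∃ m, n = m + 1 := ⟨n - 1, by omega⟩
  have hsign : ((-1 : ℤ[X]) ^ (n + 2) * X ^ ((n + 2).choose 2)).coeff k = 0 := by
    rw [← C_1, ← C_neg, ← C_pow, coeff_C_mul_X_pow,
      if_neg ((hk.trans_lt (lt_choose_two_succ hn)).ne)]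
  rw [A, dq, coeff_add, hsign, add_zero, coeff_geom_sum_mul _ (by omega)]
  rfl

lemma dq_two : dq 2 = X := by
  simp [dq]

lemma dq_three : dq 3 = X + X ^ 2 := by
  simp [dq, sum_range_succ]
  ring

lemma A_zero_of_two_le {n : ℕ} (hn : 2 ≤ n) : A n 0 = 0 := by
  induction n, hn using Nat.le_induction with
  | base => simp [A, dq_two]
  | succ n hn ih => simp [A_succ hn (Nat.zero_le n), ih]

lemma A_one_of_two_le {n : ℕ} (hn : 2 ≤ n) : A n 1 = 1 := by
  induction n, hn using Nat.le_induction with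
  | base => simp [A, dq_two]
  | succ n hn ih => simp [A_succ (k := 1) hn (by omega), sum_range_succ, ih, A_zero_of_two_le hn]

lemma A_two_of_two_le {n : ℕ} (hn : 2 ≤ n) : A n 2 = n - 2 := by
  induction n, hn using Nat.le_induction with
  | base => simp [A, dq_two, coeff_X]
  | succ n hn ih =>
    simp only [A_succ (k := 2) hn hn, sum_range_succ, sum_range_zero, ih, A_zero_of_two_le hn,
      A_one_of_two_le hn]
    push_cast
    ring

lemma A_three_of_three_le {n : ℕ} (hn : 3 ≤ n) : (A n 3 : ℚ) = n * (n - 3) / 2 := by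
  induction n, hn using Nat.le_induction with
  | base => simp [A, dq_three, coeff_X, coeff_X_pow]
  | succ n hn ih =>
    have hn' : 2 ≤ n := by omega
    rw [A_succ hn' hn]
    simp only [sum_range_succ, sum_range_zero, Int.cast_add, ih, A_zero_of_two_le hn',
      A_one_of_two_le hn', A_two_of_two_le hn']
    push_cast
    ring

theorem stmt_8_general (m : ℕ) (hm : 6 ≤ m) :
    (A m 3 : ℚ) = (m : ℚ) * ((m : ℚ) - 3) / 2 :=
  A_three_of_three_le (by omega)

theorem stmt_8 (m : ℕ) (hm : 6 ≤ m) (he : Even m) :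
    (A m 3 : ℚ) = (m : ℚ) * ((m : ℚ) - 3) / 2 :=
  stmt_8_general m hm
end

section
/- For even m ≥ 6, with β_m = binom(m,2), the coefficient of q^{β_m - 1} in d_m(q) equals m/2 - 1. -/
open Polynomial

/-!
Write `β_n = C(n, 2)`, so that `β_{n+1} = β_n + n`. By induction `deg d_n ≤ β_n`, so multiplying
`d_n` by `1 + q + ⋯ + q^n` only the terms `q^n` and `q^{n-1}` reach the degrees `β_{n+1}` and
`β_{n+1} - 1`. Hence the top coefficient `t_n` of `d_n` satisfies `t_{n+1} = t_n + (-1)^{n+1}`,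
i.e. `t_n = [n even]`, and the next one satisfies `s_{n+1} = s_n + t_n`, i.e. `s_n = ⌊(n-1)/2⌋`.
-/

namespace Polynomial

variable {R : Type*} [Semiring R]

theorem coeff_geomSum_mul_of_natDegree_le {p : R[X]} {D : ℕ} (hp : p.natDegree ≤ D) (n : ℕ) :
    ((∑ i ∈ Finset.range n, X ^ i) * p).coeff (D + n) = 0 := by
  rw [Finset.sum_mul, finsetSum_coeff]
  refine Finset.sum_eq_zero fun i hi => ?_
  rw [coeff_X_pow_mul']
  split_ifs
  · exact coeff_eq_zero_of_natDegree_lt (by rw [Finset.mem_range] at hi; omega)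
  · rfl

theorem coeff_geomSum_succ_mul_of_natDegree_le {p : R[X]} {D : ℕ} (hp : p.natDegree ≤ D)
    (n : ℕ) : ((∑ i ∈ Finset.range (n + 1), X ^ i) * p).coeff (D + n) = p.coeff D := by
  rw [Finset.sum_range_succ, add_mul, coeff_add, coeff_geomSum_mul_of_natDegree_le hp,
    coeff_X_pow_mul, zero_add]

theorem coeff_geomSum_add_two_mul_of_natDegree_le {p : R[X]} {D : ℕ} (hp : p.natDegree ≤ D + 1)
    (n : ℕ) : ((∑ i ∈ Finset.range (n + 2), X ^ i) * p).coeff (D + n + 1) =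
      p.coeff (D + 1) + p.coeff D := by
  rw [Finset.sum_range_succ, add_mul, coeff_add, add_right_comm,
    coeff_geomSum_succ_mul_of_natDegree_le hp, add_assoc, add_comm 1 n, coeff_X_pow_mul]

end Polynomial

theorem Nat.choose_two_succ (n : ℕ) : (n + 1).choose 2 = n.choose 2 + n := by
  rw [Nat.choose_succ_succ, Nat.choose_one_right, add_comm]

theorem dq_add_two (n : ℕ) :
    dq (n + 2) = (∑ i ∈ Finset.range (n + 2), X ^ i) * dq (n + 1)
      + C ((-1) ^ (n + 2)) * X ^ ((n + 2).choose 2) := by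
  rw [dq]; simp

theorem natDegree_dq_le : ∀ n, (dq n).natDegree ≤ n.choose 2
  | 0 => by simp [dq]
  | 1 => by simp [dq]
  | n + 2 => by
    have hgeom : (∑ i ∈ Finset.range (n + 2), (X : ℤ[X]) ^ i).natDegree ≤ n + 1 :=
      natDegree_sum_le_of_forall_le _ _ fun i hi => by
        rw [natDegree_X_pow]; exact Nat.lt_succ_iff.mp (Finset.mem_range.mp hi)
    have hprod := (natDegree_mul_le (p := ∑ i ∈ Finset.range (n + 2), (X : ℤ[X]) ^ i)
      (q := dq (n + 1))).trans (add_le_add hgeom (natDegree_dq_le (n + 1)))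
    rw [dq_add_two, Nat.choose_two_succ (n + 1)]
    refine (natDegree_add_le _ _).trans (max_le (by omega) ?_)
    exact natDegree_C_mul_X_pow_le _ _

theorem coeff_dq_choose_two :
    ∀ {n : ℕ}, n ≠ 0 → (dq n).coeff (n.choose 2) = if Even n then 1 else 0
  | 1, _ => by simp [dq]
  | n + 2, _ => by
    rw [dq_add_two, coeff_add, Nat.choose_two_succ (n + 1),
      coeff_geomSum_succ_mul_of_natDegree_le (natDegree_dq_le (n + 1)),
      coeff_dq_choose_two n.succ_ne_zero, coeff_C_mul_X_pow, if_pos rfl]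
    rcases Nat.even_or_odd n with h | h <;> simp [h, Nat.even_add_one, pow_add, h.neg_one_pow]

theorem coeff_dq_choose_two_sub_one :
    ∀ {n : ℕ}, n ≠ 0 → (dq n).coeff (n.choose 2 - 1) = ((n - 1) / 2 : ℕ)
  | 1, _ => by simp [dq]
  | 2, _ => by simp [dq]
  | n + 3, _ => by
    have hpos : 1 ≤ (n + 2).choose 2 := Nat.choose_pos (by omega)
    have hidx : (n + 2).choose 2 + (n + 2) - 1 = (n + 2).choose 2 - 1 + (n + 1) + 1 := by omega
    have htop : (n + 2).choose 2 - 1 + 1 = (n + 2).choose 2 := by omega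
    rw [dq_add_two, coeff_add, Nat.choose_two_succ (n + 2), hidx,
      coeff_geomSum_add_two_mul_of_natDegree_le (htop ▸ natDegree_dq_le (n + 2)), htop,
      coeff_dq_choose_two (by omega), coeff_dq_choose_two_sub_one (by omega),
      coeff_C_mul_X_pow, if_neg (by omega : _ ≠ (n + 2).choose 2 + (n + 2))]
    split_ifs with h <;> rw [Nat.even_iff] at h <;> omega

theorem stmt_10 (m : ℕ) (hm : 6 ≤ m) (he : Even m) :
    (A m (m.choose 2 - 1) : ℚ) = (m : ℚ) / 2 - 1 := by
  obtain ⟨k, rfl⟩ := he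
  rw [A, coeff_dq_choose_two_sub_one (by omega), show (k + k - 1) / 2 = k - 1 by omega,
    Nat.cast_sub (by omega : 1 ≤ k)]
  push_cast
  ring
end
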